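/- arXiv:1412.4524 — 4 statements merged into one kernel-verified Lean document; each statement's English description precedes it below -/
import Mathlib

section
/- For any endomorphism φ of a group Π, any β ∈ Π, and any n ≥ 1, the map α ↦ α · (β φ(β) φ²(β) ⋯ φ^{n-1}(β))⁻¹ induces a bijection from the Reidemeister classes of φⁿ to the Reidemeister classes of (τ_β ∘ φ)ⁿ. Hence R(φⁿ) = R((τ_β ∘ φ)ⁿ) for all n. -/
variable {G : Type*} [Group G]

/-- The Reidemeister relation of an endomorphism `φ`: `b` is obtained from `a` by the
Reidemeister action `(γ, a) ↦ γ * a * (φ γ)⁻¹`. -/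
def ReidRel (φ : Monoid.End G) (a b : G) : Prop := ∃ γ : G, b = γ * a * (φ γ)⁻¹

/-- The Reidemeister relation is an equivalence relation. -/
def ReidSetoid (φ : Monoid.End G) : Setoid G where
  r := ReidRel φ
  iseqv := by
    constructor
    · intro x; exact ⟨1, by simp⟩
    · rintro x y ⟨γ, rfl⟩
      exact ⟨γ⁻¹, by simp [mul_assoc]⟩
    · rintro x y z ⟨γ, rfl⟩ ⟨δ, rfl⟩
      exact ⟨δ * γ, by simp [map_mul, mul_assoc]⟩

/-- The inner automorphism `τ_β : x ↦ β x β⁻¹` as a monoid endomorphism. -/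
def tauConj (β : G) : Monoid.End G := (MulAut.conj β).toMonoidHom

/-- `β φ(β) φ²(β) ⋯ φ^{n-1}(β)`. -/
def prodIter (φ : Monoid.End G) (β : G) (n : ℕ) : G :=
  ((List.range n).map (fun i => (φ ^ i) β)).prod

/-- `α φ^m(α) φ^{2m}(α) ⋯ φ^{(k-1)m}(α)` (`k` factors). -/
def boost (φ : Monoid.End G) (m k : ℕ) (α : G) : G :=
  ((List.range k).map (fun i => (φ ^ (i * m)) α)).prod

/-- A Reidemeister class of `φⁿ` is irreducible if it is not in the image of any
boosting map `ι_{m,n}` for a proper divisor `m` of `n`. -/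
def IrredClass (φ : Monoid.End G) (n : ℕ) (x : Quotient (ReidSetoid (φ ^ n))) : Prop :=
  ¬ ∃ m : ℕ, 0 < m ∧ m ∣ n ∧ m < n ∧ ∃ α : G,
      x = Quotient.mk (ReidSetoid (φ ^ n)) (boost φ m (n / m) α)

/-! Twisting by the inner automorphism `τ_β` telescopes: `(τ_β ∘ φ)ⁿ = τ_p ∘ φⁿ` with
`p = β φ(β) ⋯ φ^{n-1}(β)`. Twisting an endomorphism `ψ` by an inner automorphism `τ_g` only
translates its Reidemeister classes, since `γ a ψ(γ)⁻¹ g⁻¹ = γ (a g⁻¹) (g ψ(γ) g⁻¹)⁻¹`. -/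

lemma tauConj_apply (g x : G) : tauConj g x = g * x * g⁻¹ := rfl

lemma prodIter_succ (φ : Monoid.End G) (β : G) (n : ℕ) :
    prodIter φ β (n + 1) = prodIter φ β n * (φ ^ n) β := by
  simp [prodIter, List.range_succ]

lemma tauConj_mul_pow (φ : Monoid.End G) (β : G) (n : ℕ) :
    (tauConj β * φ) ^ n = tauConj (prodIter φ β n) * φ ^ n := by
  induction n with
  | zero => ext x; simp [prodIter, tauConj_apply]
  | succ n ih =>
    ext x
    rw [pow_succ, ih, prodIter_succ, pow_succ]
    simp only [Monoid.End.coe_mul, Function.comp_apply, tauConj_apply, map_mul, map_inv]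
    group

lemma reidRel_tauConj_mul_iff (ψ : Monoid.End G) (g a b : G) :
    ReidRel ψ a b ↔ ReidRel (tauConj g * ψ) (a * g⁻¹) (b * g⁻¹) := by
  refine exists_congr fun γ => ?_
  rw [Monoid.End.coe_mul, Function.comp_apply, tauConj_apply]
  constructor
  · rintro rfl; group
  · intro h
    rw [← mul_right_cancel_iff (a := g⁻¹), h]
    group

theorem stmt_1_general {G : Type*} [Group G] (φ : Monoid.End G) (β : G) (n : ℕ) :
    ∃ e : Quotient (ReidSetoid (φ ^ n)) ≃ Quotient (ReidSetoid ((tauConj β * φ) ^ n)),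
      (∀ α : G, e (Quotient.mk (ReidSetoid (φ ^ n)) α) =
          Quotient.mk (ReidSetoid ((tauConj β * φ) ^ n)) (α * (prodIter φ β n)⁻¹)) ∧
      Nat.card (Quotient (ReidSetoid (φ ^ n))) =
        Nat.card (Quotient (ReidSetoid ((tauConj β * φ) ^ n))) := by
  let e : Quotient (ReidSetoid (φ ^ n)) ≃ Quotient (ReidSetoid ((tauConj β * φ) ^ n)) :=
    Quotient.congr (Equiv.mulRight (prodIter φ β n)⁻¹) fun a b => by
      rw [tauConj_mul_pow]
      exact reidRel_tauConj_mul_iff (φ ^ n) (prodIter φ β n) a b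
  exact ⟨e, fun _ => rfl, Nat.card_congr e⟩

/-- for `n ≥ 1`, right multiplication by `(β φ(β) ⋯ φ^{n-1}(β))⁻¹` induces a
bijection from the Reidemeister classes of `φⁿ` to those of `(τ_β ∘ φ)ⁿ`;
hence `R(φⁿ) = R((τ_β ∘ φ)ⁿ)`. -/
theorem stmt_1 {G : Type*} [Group G] (φ : Monoid.End G) (β : G) (n : ℕ) (hn : 1 ≤ n) :
    ∃ e : Quotient (ReidSetoid (φ ^ n)) ≃ Quotient (ReidSetoid ((tauConj β * φ) ^ n)),
      (∀ α : G, e (Quotient.mk (ReidSetoid (φ ^ n)) α) =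
          Quotient.mk (ReidSetoid ((tauConj β * φ) ^ n)) (α * (prodIter φ β n)⁻¹)) ∧
      Nat.card (Quotient (ReidSetoid (φ ^ n))) =
        Nat.card (Quotient (ReidSetoid ((tauConj β * φ) ^ n))) :=
  stmt_1_general φ β n
end

section
/- Let (R_k) be a sequence of non-negative integers with R_k = ∑_{i=1}^r ρ_i λ_i^k for distinct nonzero complex λ_i and nonzero integer ρ_i, and set λ = max_i |λ_i|. If λ > 1, then limsup_{k→∞} (log R_k)/k = log λ (with the convention that terms with R_k = 0 are avoided along the limsup, i.e., limsup_k R_k^{1/k} = λ). In particular, the radius of convergence R of the power series ∑_k (R_k/k) z^k satisfies 1/R = λ. -/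
open Filter Topology Matrix

/-!
The triangle inequality gives `R k ≤ (∑ |ρ i|) * λ ^ k`. Conversely, the `r` consecutive terms
`R k, …, R (k + r - 1)` are the image of the vector `(ρ i * λ i ^ k)_i` under the Vandermonde matrix
of the distinct `λ i`, which is invertible; so for `|λ i₀| = λ` the term `|ρ i₀| * λ ^ k` is at most
a fixed multiple of the largest of them, and every window of length `r` contains an `n` with
`R n ≥ c * λ ^ n`. Both constants disappear under `n`-th roots.
-/

section RootAsymptotics

theorem tendsto_mul_pow_rpow_inv_natCast {C L : ℝ} (hC : 0 < C) (hL : 0 ≤ L) :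
    Tendsto (fun n : ℕ => (C * L ^ n) ^ ((n : ℝ)⁻¹)) atTop (𝓝 L) := by
  have hroot : Tendsto (fun n : ℕ => C ^ ((n : ℝ)⁻¹)) atTop (𝓝 1) := by
    simpa [Function.comp_def] using
      (Real.continuousAt_const_rpow hC.ne').tendsto.comp tendsto_inv_atTop_nhds_zero_nat
  have hlim : Tendsto (fun n : ℕ => C ^ ((n : ℝ)⁻¹) * L) atTop (𝓝 L) := by
    simpa using hroot.mul_const L
  refine hlim.congr' ?_
  filter_upwards [eventually_ne_atTop 0] with n hn
  rw [Real.mul_rpow hC.le (pow_nonneg hL n), Real.pow_rpow_inv_natCast hL hn]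

theorem limsup_eq_of_eventually_le_of_frequently_ge {ι : Type*} {l : Filter ι} [l.NeBot]
    {f g h : ι → ℝ} {a : ℝ} (hg : Tendsto g l (𝓝 a)) (hh : Tendsto h l (𝓝 a))
    (hfg : ∀ᶠ x in l, f x ≤ g x) (hhf : ∃ᶠ x in l, h x ≤ f x) : limsup f l = a := by
  have frequently_ge : ∀ c < a, ∃ᶠ x in l, c ≤ f x := fun c hc =>
    (hhf.and_eventually (hh.eventually_const_le hc)).mono fun _ hx => hx.2.trans hx.1
  have hbdd : IsBoundedUnder (· ≤ ·) l f := hg.isBoundedUnder_le.mono_le hfg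
  have hcobdd : IsCoboundedUnder (· ≤ ·) l f :=
    IsCoboundedUnder.of_frequently_ge (frequently_ge (a - 1) (by linarith))
  refine le_antisymm ?_ ((le_limsup_iff' hcobdd hbdd).2 frequently_ge)
  exact (limsup_le_limsup hfg hcobdd hg.isBoundedUnder_le).trans_eq hg.limsup_eq

theorem limsup_rpow_inv_natCast_eq_of_pow_bounds {u : ℕ → ℝ} (hu : ∀ n, 0 ≤ u n) {B E L : ℝ}
    (hB : 0 < B) (hE : 0 < E) (hL : 0 ≤ L) (hup : ∀ᶠ n in atTop, u n ≤ B * L ^ n)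
    (hlow : ∃ᶠ n in atTop, L ^ n ≤ E * u n) :
    limsup (fun n : ℕ => u n ^ ((n : ℝ)⁻¹)) atTop = L := by
  refine limsup_eq_of_eventually_le_of_frequently_ge (tendsto_mul_pow_rpow_inv_natCast hB hL)
    (tendsto_mul_pow_rpow_inv_natCast (inv_pos.2 hE) hL) ?_ ?_
  · filter_upwards [hup] with n hn
    exact Real.rpow_le_rpow (hu n) hn (by positivity)
  · refine hlow.mono fun n hn => Real.rpow_le_rpow (by positivity) ?_ (by positivity)
    rwa [inv_mul_le_iff₀ hE]

theorem frequently_pow_le_of_eventually_exists_window {u : ℕ → ℝ} {C L : ℝ} {r : ℕ} (hL : 1 ≤ L)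
    (h : ∀ᶠ k in atTop, ∃ j : Fin r, L ^ k ≤ C * u (k + j)) :
    ∃ᶠ n in atTop, L ^ n ≤ C * L ^ r * u n := by
  rw [frequently_atTop]
  intro a
  obtain ⟨N, hN⟩ := eventually_atTop.1 h
  obtain ⟨j, hj⟩ := hN (max a N) (le_max_right a N)
  refine ⟨max a N + j, (le_max_left a N).trans (Nat.le_add_right _ _), ?_⟩
  have hLr : L ^ (j : ℕ) ≤ L ^ r := pow_le_pow_right₀ hL j.is_lt.le
  have hu : 0 ≤ C * u (max a N + j) := (pow_nonneg (zero_le_one.trans hL) _).trans hj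
  calc L ^ (max a N + j) ≤ C * u (max a N + j) * L ^ r := by
        rw [pow_add]; gcongr
    _ = C * L ^ r * u (max a N + j) := by ring

end RootAsymptotics

section ExponentialSums

theorem norm_sum_mul_pow_le {ι K : Type*} [Fintype ι] [NormedField K] {c lam : ι → K} {L : ℝ}
    (hlam : ∀ i, ‖lam i‖ ≤ L) (k : ℕ) :
    ‖∑ i, c i * lam i ^ k‖ ≤ (∑ i, ‖c i‖) * L ^ k := by
  rw [Finset.sum_mul]
  refine (norm_sum_le _ _).trans (Finset.sum_le_sum fun i _ => ?_)
  rw [norm_mul, norm_pow]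
  gcongr
  exact hlam i

theorem mul_pow_eq_sum_mul_inv_vandermonde {K : Type*} [Field K] {r : ℕ} {lam : Fin r → K}
    (hinj : Function.Injective lam) (c : Fin r → K) (k : ℕ) (i : Fin r) :
    c i * lam i ^ k = ∑ j : Fin r, (∑ l, c l * lam l ^ (k + (j : ℕ))) * (vandermonde lam)⁻¹ j i := by
  have hM : IsUnit (vandermonde lam).det := (det_vandermonde_ne_zero_iff.2 hinj).isUnit
  have hrow : vecMul (fun l => c l * lam l ^ k) (vandermonde lam) =
      fun j : Fin r => ∑ l, c l * lam l ^ (k + (j : ℕ)) := by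
    ext j
    simp only [vecMul, dotProduct, vandermonde_apply, pow_add, mul_assoc]
  calc c i * lam i ^ k
      = vecMul (vecMul (fun l => c l * lam l ^ k) (vandermonde lam)) (vandermonde lam)⁻¹ i := by
        rw [vecMul_vecMul, mul_nonsing_inv _ hM, vecMul_one]
    _ = _ := by rw [hrow]; rfl

theorem exists_pow_le_mul_norm_sum_window {K : Type*} [NormedField K] {r : ℕ} {lam : Fin r → K}
    (hinj : Function.Injective lam) (c : Fin r → K) {i : Fin r} (hc : c i ≠ 0) :
    ∃ C > 0, ∀ k : ℕ, ∃ j : Fin r, ‖lam i‖ ^ k ≤ C * ‖∑ l, c l * lam l ^ (k + j)‖ := by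
  set a : Fin r → ℝ := fun j => ‖(vandermonde lam)⁻¹ j i‖
  have hci : 0 < ‖c i‖ := norm_pos_iff.2 hc
  refine ⟨(∑ j, a j + 1) / ‖c i‖, by positivity, fun k => ?_⟩
  have : Nonempty (Fin r) := ⟨i⟩
  obtain ⟨j, hj⟩ := Finite.exists_max fun j : Fin r => ‖∑ l, c l * lam l ^ (k + j)‖
  refine ⟨j, ?_⟩
  rw [div_mul_eq_mul_div, le_div_iff₀ hci]
  calc ‖lam i‖ ^ k * ‖c i‖ = ‖c i * lam i ^ k‖ := by rw [norm_mul, norm_pow, mul_comm]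
    _ ≤ ∑ j' : Fin r, ‖∑ l, c l * lam l ^ (k + (j' : ℕ))‖ * a j' := by
        rw [mul_pow_eq_sum_mul_inv_vandermonde hinj c k i]
        exact (norm_sum_le _ _).trans_eq (by simp only [norm_mul, a])
    _ ≤ ∑ j' : Fin r, ‖∑ l, c l * lam l ^ (k + (j : ℕ))‖ * a j' :=
        Finset.sum_le_sum fun j' _ => mul_le_mul_of_nonneg_right (hj j') (norm_nonneg _)
    _ ≤ (∑ j, a j + 1) * ‖∑ l, c l * lam l ^ (k + (j : ℕ))‖ := by
        rw [← Finset.mul_sum, mul_comm]; gcongr; linarith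

end ExponentialSums

theorem stmt_8_general (r : ℕ) (ρ : Fin r → ℤ) (lam : Fin r → ℂ)
    (hinj : Function.Injective lam) (hρ : ∀ i, ρ i ≠ 0)
    (R : ℕ → ℕ)
    (hR : ∀ k : ℕ, 1 ≤ k → (R k : ℂ) = ∑ i, (ρ i : ℂ) * lam i ^ k)
    (L : ℝ) (hub : ∀ i, ‖lam i‖ ≤ L)
    (hmem : ∃ i, ‖lam i‖ = L) (hL : 1 < L) :
    Filter.limsup (fun k : ℕ => ((R k : ℝ)) ^ ((k : ℝ)⁻¹)) Filter.atTop = L := by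
  obtain ⟨i₀, hi₀⟩ := hmem
  have hρ₀ : (ρ i₀ : ℂ) ≠ 0 := Int.cast_ne_zero.2 (hρ i₀)
  have hRnorm : ∀ k, 1 ≤ k → (R k : ℝ) = ‖∑ i, (ρ i : ℂ) * lam i ^ k‖ := fun k hk => by
    rw [← hR k hk, Complex.norm_natCast]
  obtain ⟨C, hC, hwindow⟩ := exists_pow_le_mul_norm_sum_window hinj (fun i => (ρ i : ℂ)) hρ₀
  have hB : 0 < ∑ i, ‖(ρ i : ℂ)‖ :=
    Finset.sum_pos' (fun i _ => norm_nonneg _) ⟨i₀, Finset.mem_univ _, norm_pos_iff.2 hρ₀⟩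
  refine limsup_rpow_inv_natCast_eq_of_pow_bounds (fun n => Nat.cast_nonneg _) hB
    (E := C * L ^ r) (by positivity) (by linarith) ?_ ?_
  · filter_upwards [eventually_ge_atTop 1] with k hk
    rw [hRnorm k hk]
    exact norm_sum_mul_pow_le hub k
  · refine frequently_pow_le_of_eventually_exists_window hL.le ?_
    filter_upwards [eventually_ge_atTop 1] with k hk
    obtain ⟨j, hj⟩ := hwindow k
    exact ⟨j, by rwa [hRnorm _ (by omega), ← hi₀]⟩

/-- if `R k = ∑ ρ_i λ_i^k` is a non-negative integer exponential sum and
`L = max |λ_i| > 1`, then `limsup R_k^{1/k} = L`; equivalently, by Cauchy–Hadamard, the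
radius of convergence `𝖱` of `∑ (R_k/k) z^k` satisfies `1/𝖱 = L`. -/
theorem stmt_8 (r : ℕ) (ρ : Fin r → ℤ) (lam : Fin r → ℂ)
    (hinj : Function.Injective lam) (hlam : ∀ i, lam i ≠ 0) (hρ : ∀ i, ρ i ≠ 0)
    (R : ℕ → ℕ)
    (hR : ∀ k : ℕ, 1 ≤ k → (R k : ℂ) = ∑ i, (ρ i : ℂ) * lam i ^ k)
    (L : ℝ) (hub : ∀ i, ‖lam i‖ ≤ L)
    (hmem : ∃ i, ‖lam i‖ = L) (hL : 1 < L) :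
    Filter.limsup (fun k : ℕ => ((R k : ℝ)) ^ ((k : ℝ)⁻¹)) Filter.atTop = L :=
  stmt_8_general r ρ lam hinj hρ R hR L hub hmem hL
end

section
/- Let p be a prime and A a square matrix with entries in the field 𝔽_p. Then there exists a positive integer k with gcd(p, k) = 1 such that tr(A^{k+i}) = tr(A^i) for all i ≥ 1. -/
/-!
Over a finite field `K` with `q` elements, `tr (M ^ q) = (tr M) ^ q = tr M`, so the sequence
`u j = tr (A ^ j)` satisfies `u (q * j) = u j`. Since `K`-matrices form a finite monoid, the powers of
`A` are eventually periodic, with some period `p ^ a * k` where `p` is the characteristic and `p ∤ k`.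
For `i ≥ 1` and `m` large, `q ^ m * k` is a multiple of that period and `q ^ m * i` lies in the
periodic range, hence `u (k + i) = u (q ^ m * (k + i)) = u (q ^ m * i) = u i`.
-/

open Matrix

theorem Monoid.exists_pow_add_eq_pow {M : Type*} [Monoid M] [Finite M] (x : M) :
    ∃ s k, 0 < k ∧ x ^ (s + k) = x ^ s := by
  obtain ⟨a, b, hab, he⟩ := Finite.exists_ne_map_eq_of_infinite (fun i : ℕ => x ^ i)
  rcases Nat.lt_or_gt_of_ne hab with h | h
  · exact ⟨a, b - a, by omega, by rw [Nat.add_sub_cancel' h.le]; exact he.symm⟩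
  · exact ⟨b, a - b, by omega, by rw [Nat.add_sub_cancel' h.le]; exact he⟩

theorem pow_add_mul_eq_pow_of_pow_add_eq_pow {M : Type*} [Monoid M] {x : M} {s k : ℕ}
    (h : x ^ (s + k) = x ^ s) {j : ℕ} (hj : s ≤ j) (c : ℕ) : x ^ (j + c * k) = x ^ j := by
  obtain ⟨t, rfl⟩ := Nat.exists_eq_add_of_le hj
  have hs : x ^ (s + c * k) = x ^ s := by
    induction c with
    | zero => simp
    | succ c ih => rw [Nat.succ_mul, ← add_assoc, pow_add, ih, ← pow_add, h]
  rw [show s + t + c * k = s + c * k + t by ring, pow_add, hs, ← pow_add]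

theorem FiniteField.trace_pow_card_mul {K n : Type*} [Field K] [Fintype K] [Fintype n]
    [DecidableEq n] (M : Matrix n n K) (j : ℕ) :
    trace (M ^ (Fintype.card K * j)) = trace (M ^ j) := by
  rw [mul_comm, pow_mul, FiniteField.trace_pow_card, FiniteField.pow_card]

theorem exists_coprime_add_eq_of_mul_eq_of_eventually_periodic {α : Type*} {u : ℕ → α}
    {p q s k₀ : ℕ} (hp : p.Prime) (hpq : p ∣ q) (hq : 0 < q) (hmul : ∀ j, u (q * j) = u j)
    (hk₀ : 0 < k₀) (hper : ∀ j, s ≤ j → ∀ c, u (j + c * k₀) = u j) :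
    ∃ k, 0 < k ∧ Nat.Coprime p k ∧ ∀ i, 1 ≤ i → u (k + i) = u i := by
  have hmul_pow : ∀ m j, u (q ^ m * j) = u j := by
    intro m
    induction m with
    | zero => simp
    | succ m ih => intro j; rw [pow_succ, mul_assoc, ih, hmul]
  obtain ⟨a, k, hpk, rfl⟩ := Nat.exists_eq_pow_mul_and_not_dvd hk₀.ne' p hp.ne_one
  refine ⟨k, Nat.pos_of_ne_zero (by rintro rfl; simp at hpk), hp.coprime_iff_not_dvd.2 hpk,
    fun i hi => ?_⟩
  obtain ⟨c, hc⟩ : p ^ a ∣ q ^ (a + s) :=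
    (pow_dvd_pow_of_dvd hpq a).trans (pow_dvd_pow q (Nat.le_add_right a s))
  have hq1 : 1 < q := lt_of_lt_of_le hp.one_lt (Nat.le_of_dvd hq hpq)
  have hs : s ≤ q ^ (a + s) * i :=
    calc s ≤ q ^ s := (Nat.lt_pow_self hq1).le
      _ ≤ q ^ (a + s) := Nat.pow_le_pow_right hq (Nat.le_add_left s a)
      _ ≤ q ^ (a + s) * i := Nat.le_mul_of_pos_right _ hi
  calc u (k + i) = u (q ^ (a + s) * (k + i)) := (hmul_pow _ _).symm
    _ = u (q ^ (a + s) * i + c * (p ^ a * k)) := by congr 1; rw [hc]; ring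
    _ = u (q ^ (a + s) * i) := hper _ hs c
    _ = u i := hmul_pow _ _

theorem FiniteField.exists_coprime_ringChar_trace_pow_add_eq {K n : Type*} [Field K] [Fintype K]
    [Fintype n] [DecidableEq n] (A : Matrix n n K) :
    ∃ k, 0 < k ∧ Nat.Coprime (ringChar K) k ∧
      ∀ i, 1 ≤ i → trace (A ^ (k + i)) = trace (A ^ i) := by
  obtain ⟨s, k₀, hk₀, hA⟩ := Monoid.exists_pow_add_eq_pow A
  obtain ⟨r, hp, hcard⟩ := FiniteField.card K (ringChar K)
  exact exists_coprime_add_eq_of_mul_eq_of_eventually_periodic (u := fun j => trace (A ^ j))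
    hp (hcard ▸ dvd_pow_self _ r.ne_zero) Fintype.card_pos (FiniteField.trace_pow_card_mul A) hk₀
    (fun j (hj : s ≤ j) c => by simp only [pow_add_mul_eq_pow_of_pow_add_eq_pow hA hj c])

/-- Matsuoka: for a prime `p` and a square matrix `A` over `𝔽_p`, there is
`k` coprime to `p` such that `tr(A^{k+i}) = tr(A^i)` for all `i ≥ 1`. -/
theorem stmt_10 (p n : ℕ) (hp : p.Prime) (A : Matrix (Fin n) (Fin n) (ZMod p)) :
    ∃ k : ℕ, 0 < k ∧ Nat.Coprime p k ∧
      ∀ i : ℕ, 1 ≤ i → (A ^ (k + i)).trace = (A ^ i).trace := by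
  have := Fact.mk hp
  simpa only [ZMod.ringChar_zmod_n] using FiniteField.exists_coprime_ringChar_trace_pow_add_eq A
end

section
/- Let φ : ℤ → ℤ be the endomorphism φ(1) = −2. Then for each k ≥ 1 the Reidemeister classes of φ^k are the cosets n + (1 − (−2)^k)ℤ, so R(φ^k) = |1 − (−2)^k|, and the boosting map ι_{k,ℓ} : R[φ^k] → R[φ^ℓ] (for k | ℓ) sends the class of n to the class of ((1−(−2)^ℓ)/(1−(−2)^k))·n. Consequently, the set of heights of φ is ℕ \ {2}; in particular every class of φ² is reducible to a class of φ, while for every ℓ ≠ 2 there is an irreducible class in R[φ^ℓ]. -/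
/-- The Reidemeister relation for the endomorphism `m ↦ d * m` of `ℤ` (written
additively): `b` is Reidemeister-equivalent to `a` for `φ^k` iff
`b = m + a - d^k * m` for some `m`. -/
def ReidRelZ (d : ℤ) (k : ℕ) (a b : ℤ) : Prop := ∃ m : ℤ, b = m + a - d ^ k * m

/-- The boosting map `ι_{k,ℓ}` for the endomorphism `m ↦ d * m` of `ℤ`:
`n ↦ (1 + d^k + d^{2k} + ⋯ + d^{ℓ-k}) * n`. -/
def boostZ (d : ℤ) (k l : ℕ) (n : ℤ) : ℤ := (∑ i ∈ Finset.range (l / k), d ^ (i * k)) * n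

/-- A class `[n]^ℓ` is irreducible (has height `ℓ`) if it is not Reidemeister-equivalent
to a boosted class from any proper divisor `k` of `ℓ`. -/
def IrredZ (d : ℤ) (l : ℕ) (n : ℤ) : Prop :=
  ¬ ∃ k : ℕ, 0 < k ∧ k ∣ l ∧ k < l ∧ ∃ a : ℤ, ReidRelZ d l (boostZ d k l a) n

/-!
The Reidemeister classes of `m ↦ d m` on `ℤ` at level `k` are the cosets of `(1 - d^k)ℤ`, and
`ι_{k,ℓ}` is multiplication by `S = 1 + d^k + ⋯ + d^{ℓ-k}`, where `(1 - d^k) S = 1 - d^ℓ`.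
If the class of `1` at level `ℓ` is hit by `ι_{k,ℓ}`, then `S` divides `1`, so
`|1 - d^ℓ| = |1 - d^k|`. For `d = -2` the numbers `|1 - (-2)^k|` are `3, 3, 9, 15, 33, …`,
growing strictly from `k = 2` on, so `[1]` is irreducible at every level `ℓ ≠ 2`; at `ℓ = 2`
we have `S = 1 + d = -1`, a unit, so `ι_{1,2}` is onto.
-/

theorem reidRelZ_iff_dvd (d : ℤ) (k : ℕ) (a b : ℤ) :
    ReidRelZ d k a b ↔ (1 - d ^ k) ∣ (b - a) :=
  ⟨fun ⟨m, hm⟩ => ⟨m, by rw [hm]; ring⟩, fun ⟨m, hm⟩ => ⟨m, by linear_combination hm⟩⟩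

theorem reidRelZ_eq_ker (d : ℤ) (k : ℕ) :
    ReidRelZ d k = Setoid.ker (Int.cast : ℤ → ZMod (1 - d ^ k).natAbs) := by
  ext a b
  rw [reidRelZ_iff_dvd, Setoid.ker_def, ZMod.intCast_eq_intCast_iff_dvd_sub, Int.natAbs_dvd]

theorem natCard_quot_reidRelZ (d : ℤ) (k : ℕ) :
    Nat.card (Quot (ReidRelZ d k)) = (1 - d ^ k).natAbs := by
  rw [reidRelZ_eq_ker]
  exact (Nat.card_congr (Setoid.quotientKerEquivOfSurjective _ ZMod.intCast_surjective)).trans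
    (Nat.card_zmod _)

theorem one_sub_pow_mul_boostZ_one {d : ℤ} {k l : ℕ} (hkl : k ∣ l) :
    (1 - d ^ k) * boostZ d k l 1 = 1 - d ^ l := by
  have hg := geom_sum_mul (d ^ k) (l / k)
  rw [← pow_mul, Nat.mul_div_cancel' hkl] at hg
  simp only [boostZ, mul_one, mul_comm _ k, pow_mul]
  linear_combination -hg

theorem boostZ_eq_div_mul {d : ℤ} {k l : ℕ} (hd : 1 - d ^ k ≠ 0) (hkl : k ∣ l) (n : ℤ) :
    boostZ d k l n = ((1 - d ^ l) / (1 - d ^ k)) * n := by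
  rw [← one_sub_pow_mul_boostZ_one hkl, Int.mul_ediv_cancel_left _ hd, boostZ, boostZ, mul_one]

theorem irredZ_one_of_natAbs_ne {d : ℤ} {l : ℕ}
    (h : ∀ k, 0 < k → k < l → (1 - d ^ k).natAbs ≠ (1 - d ^ l).natAbs) : IrredZ d l 1 := by
  rintro ⟨k, hk, hkl, hklt, a, hrel⟩
  have hS := one_sub_pow_mul_boostZ_one (d := d) hkl
  have hdvd : boostZ d k l 1 ∣ 1 := by
    have h1 : boostZ d k l 1 ∣ 1 - boostZ d k l a :=
      (Dvd.intro_left _ hS).trans ((reidRelZ_iff_dvd d l _ 1).mp hrel)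
    have h2 : boostZ d k l 1 ∣ boostZ d k l a := ⟨a, by simp only [boostZ, mul_one]⟩
    simpa using dvd_add h1 h2
  apply h k hk hklt
  rw [← hS, Int.natAbs_mul, Int.isUnit_iff_natAbs_eq.mp (isUnit_of_dvd_one hdvd), mul_one]

theorem abs_one_sub_neg_two_pow_bounds (m : ℕ) :
    (2 : ℤ) ^ m - 1 ≤ |1 - (-2 : ℤ) ^ m| ∧ |1 - (-2 : ℤ) ^ m| ≤ 2 ^ m + 1 := by
  have habs : |(-2 : ℤ) ^ m| = 2 ^ m := by rw [abs_pow]; norm_num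
  constructor
  · have := abs_sub_abs_le_abs_sub ((-2 : ℤ) ^ m) 1
    rw [abs_sub_comm, habs, abs_one] at this
    linarith
  · have := abs_sub (1 : ℤ) ((-2 : ℤ) ^ m)
    rw [habs, abs_one] at this
    linarith

theorem one_sub_neg_two_pow_ne_zero {k : ℕ} (hk : 0 < k) : 1 - (-2 : ℤ) ^ k ≠ 0 := by
  have h := (abs_one_sub_neg_two_pow_bounds k).1
  have : (2 : ℤ) ≤ 2 ^ k := le_self_pow₀ (by norm_num) hk.ne'
  intro h0
  rw [h0, abs_zero] at h
  linarith

theorem abs_one_sub_neg_two_pow_lt {k l : ℕ} (hk : 0 < k) (hkl : k < l) (hl : l ≠ 2) :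
    |1 - (-2 : ℤ) ^ k| < |1 - (-2 : ℤ) ^ l| := by
  have hk' : (2 : ℤ) ^ k ≤ 2 ^ (l - 1) := pow_le_pow_right₀ (by norm_num) (by omega)
  have hl' : (2 : ℤ) ^ l = 2 * 2 ^ (l - 1) := by rw [← pow_succ']; congr 1; omega
  have h4 : (4 : ℤ) ≤ 2 ^ (l - 1) := by
    calc (4 : ℤ) = 2 ^ 2 := by norm_num
      _ ≤ 2 ^ (l - 1) := pow_le_pow_right₀ (by norm_num) (by omega)
  linarith [(abs_one_sub_neg_two_pow_bounds k).2, (abs_one_sub_neg_two_pow_bounds l).1]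

theorem irredZ_neg_two_one {l : ℕ} (hl : l ≠ 2) : IrredZ (-2) l 1 :=
  irredZ_one_of_natAbs_ne fun k hk hkl habs =>
    (abs_one_sub_neg_two_pow_lt hk hkl hl).ne (by simp only [Int.abs_eq_natAbs, habs])

theorem not_irredZ_neg_two_two (n : ℤ) : ¬ IrredZ (-2) 2 n := by
  refine not_not_intro ⟨1, one_pos, one_dvd 2, one_lt_two, -n, 0, ?_⟩
  simp [boostZ, Finset.sum_range_succ]

/-- for `φ : ℤ → ℤ`, `φ(1) = -2`, the Reidemeister classes of `φ^k` are the
cosets `n + (1 - (-2)^k)ℤ`, so `R(φ^k) = |1 - (-2)^k|`; the boosting map sends the class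
of `n` to the class of `((1-(-2)^ℓ)/(1-(-2)^k)) * n`; and the set of heights of `φ` is
`ℕ \ {2}`. -/
theorem stmt_17 :
    (∀ k : ℕ, 0 < k → ∀ a b : ℤ,
      (ReidRelZ (-2) k a b ↔ (1 - (-2 : ℤ) ^ k) ∣ (b - a))) ∧
    (∀ k : ℕ, 0 < k →
      Nat.card (Quot (ReidRelZ (-2) k)) = (1 - (-2 : ℤ) ^ k).natAbs) ∧
    (∀ k l : ℕ, 0 < k → k ∣ l → ∀ n : ℤ,
      boostZ (-2) k l n = ((1 - (-2 : ℤ) ^ l) / (1 - (-2 : ℤ) ^ k)) * n) ∧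
    (∀ l : ℕ, 0 < l → ((∃ n : ℤ, IrredZ (-2) l n) ↔ l ≠ 2)) := by
  refine ⟨fun k _ => reidRelZ_iff_dvd (-2) k, fun k _ => natCard_quot_reidRelZ (-2) k,
    fun k l hk hkl => boostZ_eq_div_mul (one_sub_neg_two_pow_ne_zero hk) hkl,
    fun l _ => ⟨?_, fun hl => ⟨1, irredZ_neg_two_one hl⟩⟩⟩
  rintro ⟨n, hn⟩ rfl
  exact not_irredZ_neg_two_two n hn
end
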